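/- Fix m ≥ 1 a perfect square and d = √m, so h = d - m/d = 0. With Σ_{m,d}(N) = ∑_{τ | N} φ(gcd(τ, N/τ)) (no divisibility constraint since everything divides 0) and Σ^new = β * Σ_{m,d}, we have 0 ≤ Σ^new(N) ≤ √N / π₂(N)² for all N ≥ 1, where π₂(N) = ∏_{p | N}(1 + 1/(p-1)). -/

import Mathlib

/-!
Both `β` and `Σ(N) = ∑_{τ ∣ N} φ(gcd(τ, N/τ))` are multiplicative: for coprime `m, n` a divisor
of `mn` splits as `ab` with `a ∣ m`, `b ∣ n`, and `gcd(ab, mn/ab) = gcd(a, m/a) gcd(b, n/b)`.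
Since `√N` and the product over `p ∣ N` factor as well, it suffices to bound `β * Σ` at prime
powers. There `Σ(p^k) = ∑_{i ≤ k} φ(p^{min(i, k-i)})` is `2p^t` for `k = 2t+1` and
`p^t + p^{t+1}` for `k = 2t+2`, so `(β * Σ)(p^k) = Σ(p^k) - 2Σ(p^{k-1}) + Σ(p^{k-2})` is `0` for
odd `k`, `p - 2` for `k = 2` and `p^{k/2-2}(p-1)^2` for even `k ≥ 4`; each value lies in
`[0, p^{k/2}((p-1)/p)^2]`.
-/

open ArithmeticFunction Finset
open scoped Nat

theorem Nat.Coprime.gcd_mul_mul {m n a b c d : ℕ} (h : m.Coprime n) (ha : a ∣ m) (hb : b ∣ n)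
    (hc : c ∣ m) (hd : d ∣ n) : (a * b).gcd (c * d) = a.gcd c * b.gcd d := by
  rw [Nat.Coprime.gcd_mul _ (h.of_dvd hc hd),
    Nat.Coprime.gcd_mul_right_cancel a (h.of_dvd hc hb).symm,
    Nat.Coprime.gcd_mul_left_cancel b (h.of_dvd ha hd)]

theorem Nat.gcd_pow_pow (p a b : ℕ) : (p ^ a).gcd (p ^ b) = p ^ min a b := by
  rcases le_total a b with h | h
  · rw [min_eq_left h, Nat.gcd_eq_left (pow_dvd_pow p h)]
  · rw [min_eq_right h, Nat.gcd_eq_right (pow_dvd_pow p h)]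

theorem Nat.one_le_factorization_of_mem_primeFactors {n p : ℕ} (hp : p ∈ n.primeFactors) :
    1 ≤ n.factorization p :=
  Nat.one_le_iff_ne_zero.mpr (Finsupp.mem_support_iff.mp hp)

theorem Nat.sum_range_totient_prime_pow {p : ℕ} (hp : p.Prime) (t : ℕ) :
    ∑ i ∈ range (t + 1), φ (p ^ i) = p ^ t :=
  (Nat.sum_divisors_prime_pow hp).symm.trans (Nat.sum_totient (p ^ t))

theorem sub_one_div_eq_inv_one_add_one_div_sub_one {x : ℝ} (hx : x ≠ 1) :
    (x - 1) / x = (1 + 1 / (x - 1))⁻¹ := by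
  rw [one_add_div (sub_ne_zero.mpr hx), sub_add_cancel, inv_div]

namespace ArithmeticFunction

section Convolution

variable {R : Type*} [CommSemiring R] (f g : ArithmeticFunction R) {p : ℕ} (hp : p.Prime)
include hp

theorem mul_apply_prime_pow (k : ℕ) :
    (f * g) (p ^ k) = ∑ i ∈ range (k + 1), f (p ^ i) * g (p ^ (k - i)) := by
  rw [mul_apply, Nat.sum_divisorsAntidiagonal (f · * g ·), Nat.sum_divisors_prime_pow hp]
  refine sum_congr rfl fun i hi => ?_
  rw [Nat.pow_div (by simpa [Nat.lt_succ_iff] using hi) hp.pos]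

theorem mul_apply_prime : (f * g) p = f 1 * g p + f p * g 1 := by
  simpa [sum_range_succ] using mul_apply_prime_pow f g hp 1

theorem mul_apply_prime_pow_add_two_of_apply_prime_pow_eq_zero
    (hf : ∀ r, 3 ≤ r → f (p ^ r) = 0) (s : ℕ) :
    (f * g) (p ^ (s + 2)) =
      f 1 * g (p ^ (s + 2)) + f p * g (p ^ (s + 1)) + f (p ^ 2) * g (p ^ s) := by
  rw [mul_apply_prime_pow f g hp, sum_range_succ', sum_range_succ', sum_range_succ',
    sum_eq_zero fun i _ => by rw [hf _ (by omega), zero_mul]]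
  simp only [zero_add, Nat.reduceAdd, pow_zero, pow_one, tsub_zero, Nat.add_one_sub_one,
    add_tsub_cancel_right]
  ring

end Convolution

namespace IsMultiplicative

theorem apply_eq_prod_primeFactors {R : Type*} [CommMonoidWithZero R] {f : ArithmeticFunction R}
    (hf : f.IsMultiplicative) {N : ℕ} (hN : N ≠ 0) :
    f N = ∏ p ∈ N.primeFactors, f (p ^ N.factorization p) :=
  hf.multiplicative_factorization f hN

theorem nonneg_of_prime_pow {R : Type*} [CommSemiring R] [PartialOrder R] [IsOrderedRing R]
    {f : ArithmeticFunction R} (hf : f.IsMultiplicative)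
    (h : ∀ p k, p.Prime → 1 ≤ k → 0 ≤ f (p ^ k)) (N : ℕ) : 0 ≤ f N := by
  rcases eq_or_ne N 0 with rfl | hN
  · simp
  rw [hf.apply_eq_prod_primeFactors hN]
  exact prod_nonneg fun p hp => h p _ (Nat.prime_of_mem_primeFactors hp)
    (Nat.one_le_factorization_of_mem_primeFactors hp)

theorem le_sqrt_mul_prod_of_prime_pow {f : ArithmeticFunction ℝ} (hf : f.IsMultiplicative)
    {c : ℕ → ℝ} (h0 : ∀ p k, p.Prime → 1 ≤ k → 0 ≤ f (p ^ k))
    (h : ∀ p k, p.Prime → 1 ≤ k → f (p ^ k) ≤ √((p : ℝ) ^ k) * c p) (N : ℕ) :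
    f N ≤ √(N : ℝ) * ∏ p ∈ N.primeFactors, c p := by
  rcases eq_or_ne N 0 with rfl | hN
  · simp
  have hN' : (N : ℝ) = ∏ p ∈ N.primeFactors, (p : ℝ) ^ N.factorization p := by
    exact_mod_cast Nat.prod_primeFactors_pow_factorization hN
  calc f N = ∏ p ∈ N.primeFactors, f (p ^ N.factorization p) :=
        hf.apply_eq_prod_primeFactors hN
    _ ≤ ∏ p ∈ N.primeFactors, √((p : ℝ) ^ N.factorization p) * c p :=
      prod_le_prod
        (fun p hp => h0 p _ (Nat.prime_of_mem_primeFactors hp)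
          (Nat.one_le_factorization_of_mem_primeFactors hp))
        fun p hp => h p _ (Nat.prime_of_mem_primeFactors hp)
          (Nat.one_le_factorization_of_mem_primeFactors hp)
    _ = √(N : ℝ) * ∏ p ∈ N.primeFactors, c p := by
      rw [prod_mul_distrib, hN', Real.sqrt_prod _ fun p _ => by positivity]

end IsMultiplicative

end ArithmeticFunction

def gcdTotientSum : ArithmeticFunction ℤ :=
  ⟨fun N => ∑ τ ∈ N.divisors, (φ (τ.gcd (N / τ)) : ℤ), by simp⟩

theorem gcdTotientSum_apply (N : ℕ) :
    gcdTotientSum N = ∑ τ ∈ N.divisors, (φ (τ.gcd (N / τ)) : ℤ) := rfl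

theorem eq_gcdTotientSum {S : ArithmeticFunction ℤ}
    (hS : ∀ N, 0 < N → S N = ∑ τ ∈ N.divisors, (φ (τ.gcd (N / τ)) : ℤ)) :
    S = gcdTotientSum := by
  ext N
  rcases Nat.eq_zero_or_pos N with rfl | hN
  · simp
  · exact hS N hN

theorem isMultiplicative_gcdTotientSum : gcdTotientSum.IsMultiplicative := by
  refine ⟨by simp [gcdTotientSum_apply], fun {m n} h => ?_⟩
  rw [gcdTotientSum_apply, h.divisors_mul, sum_map, gcdTotientSum_apply, gcdTotientSum_apply,
    sum_mul_sum, ← sum_product', ← sum_attach (m.divisors ×ˢ n.divisors)]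
  refine sum_congr rfl fun ⟨⟨a, b⟩, hab⟩ _ => ?_
  obtain ⟨⟨ha, -⟩, hb, -⟩ : (a ∣ m ∧ m ≠ 0) ∧ b ∣ n ∧ n ≠ 0 := by
    simpa only [mem_coe, mem_product, Nat.mem_divisors] using hab
  have hgcd : (a.gcd (m / a)).Coprime (b.gcd (n / b)) :=
    h.of_dvd ((Nat.gcd_dvd_left _ _).trans ha) ((Nat.gcd_dvd_left _ _).trans hb)
  change (φ ((a * b).gcd (m * n / (a * b))) : ℤ) = _
  rw [← Nat.div_mul_div_comm ha hb, h.gcd_mul_mul ha hb (Nat.div_dvd_of_dvd ha)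
    (Nat.div_dvd_of_dvd hb), Nat.totient_mul hgcd, Nat.cast_mul]

section PrimePow

variable {p : ℕ} (hp : p.Prime)
include hp

theorem gcdTotientSum_prime_pow (k : ℕ) :
    gcdTotientSum (p ^ k) = ∑ i ∈ range (k + 1), (φ (p ^ min i (k - i)) : ℤ) := by
  rw [gcdTotientSum_apply, Nat.sum_divisors_prime_pow hp]
  refine sum_congr rfl fun i hi => ?_
  rw [Nat.pow_div (by simpa [Nat.lt_succ_iff] using hi) hp.pos, Nat.gcd_pow_pow]

-- Split the range at `m + 1`: the exponent `min i (m + n + 1 - i)` is `i` on the first part and,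
-- read backwards, also on the second, so the parts are `∑_{i ≤ m} φ(p^i) = p^m` and `p^n`.
theorem gcdTotientSum_prime_pow_add_add_one {m n : ℕ} (hmn : m ≤ n + 1) (hnm : n ≤ m + 1) :
    gcdTotientSum (p ^ (m + n + 1)) = p ^ m + p ^ n := by
  rw [gcdTotientSum_prime_pow hp, show m + n + 1 + 1 = (m + 1) + (n + 1) by ring,
    sum_range_add, ← sum_range_reflect _ (n + 1), ← Nat.cast_pow, ← Nat.cast_pow,
    ← Nat.sum_range_totient_prime_pow hp m, ← Nat.sum_range_totient_prime_pow hp n, Nat.cast_sum,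
    Nat.cast_sum]
  congr 1 <;> refine sum_congr rfl fun i hi => ?_ <;> rw [mem_range] at hi <;> congr 3 <;> omega

theorem gcdTotientSum_prime_pow_two_mul_add_one (t : ℕ) :
    gcdTotientSum (p ^ (2 * t + 1)) = 2 * p ^ t := by
  rw [two_mul, gcdTotientSum_prime_pow_add_add_one hp t.le_succ t.le_succ, two_mul]

theorem gcdTotientSum_prime_pow_two_mul_add_two (t : ℕ) :
    gcdTotientSum (p ^ (2 * t + 2)) = p ^ t + p ^ (t + 1) := by
  rw [show 2 * t + 2 = t + (t + 1) + 1 by ring,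
    gcdTotientSum_prime_pow_add_add_one hp (by omega) (by omega)]

variable {β : ArithmeticFunction ℤ} (h0 : β 1 = 1) (h1 : β p = -2) (h2 : β (p ^ 2) = 1)
  (h3 : ∀ r, 3 ≤ r → β (p ^ r) = 0)
include h0 h1 h2 h3

theorem mul_gcdTotientSum_prime_pow_two_mul_add_one (t : ℕ) :
    (β * gcdTotientSum) (p ^ (2 * t + 1)) = 0 := by
  cases t with
  | zero =>
    have hG := gcdTotientSum_prime_pow_two_mul_add_one hp 0
    simp only [mul_zero, zero_add, pow_one, pow_zero, mul_one] at hG ⊢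
    rw [mul_apply_prime _ _ hp, hG, isMultiplicative_gcdTotientSum.map_one, h0, h1]
    ring
  | succ t =>
    rw [show 2 * (t + 1) + 1 = 2 * t + 1 + 2 by ring,
      mul_apply_prime_pow_add_two_of_apply_prime_pow_eq_zero _ _ hp h3, h0, h1, h2,
      show 2 * t + 1 + 2 = 2 * (t + 1) + 1 by ring, gcdTotientSum_prime_pow_two_mul_add_one hp,
      gcdTotientSum_prime_pow_two_mul_add_two hp, gcdTotientSum_prime_pow_two_mul_add_one hp]
    ring

theorem mul_gcdTotientSum_prime_sq : (β * gcdTotientSum) (p ^ 2) = p - 2 := by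
  have hG := gcdTotientSum_prime_pow_two_mul_add_two hp 0
  have hG' := gcdTotientSum_prime_pow_two_mul_add_one hp 0
  simp only [mul_zero, zero_add, pow_one, pow_zero] at hG hG'
  rw [mul_apply_prime_pow_add_two_of_apply_prime_pow_eq_zero _ _ hp h3 0, h0, h1, h2, zero_add,
    pow_one, pow_zero, hG, hG', isMultiplicative_gcdTotientSum.map_one]
  ring

theorem mul_gcdTotientSum_prime_pow_two_mul_add_four (t : ℕ) :
    (β * gcdTotientSum) (p ^ (2 * t + 4)) = p ^ t * (p - 1) ^ 2 := by
  rw [mul_apply_prime_pow_add_two_of_apply_prime_pow_eq_zero _ _ hp h3, h0, h1, h2,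
    show 2 * t + 2 + 2 = 2 * (t + 1) + 2 by ring, show 2 * t + 2 + 1 = 2 * (t + 1) + 1 by ring,
    gcdTotientSum_prime_pow_two_mul_add_two hp, gcdTotientSum_prime_pow_two_mul_add_one hp,
    gcdTotientSum_prime_pow_two_mul_add_two hp]
  ring

theorem mul_gcdTotientSum_prime_pow_bounds {k : ℕ} (hk : 1 ≤ k) :
    0 ≤ (β * gcdTotientSum) (p ^ k) ∧
      ((β * gcdTotientSum) (p ^ k) : ℝ) ≤ √((p : ℝ) ^ k) * (((p : ℝ) - 1) / p) ^ 2 := by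
  have hp0 : (0 : ℝ) < p := by exact_mod_cast hp.pos
  obtain ⟨t, rfl | rfl⟩ := Nat.even_or_odd' k
  · rcases t with _ | _ | t
    · omega
    · rw [mul_gcdTotientSum_prime_sq hp h0 h1 h2 h3]
      refine ⟨sub_nonneg.mpr (mod_cast hp.two_le), ?_⟩
      have hsq : (p : ℝ) * ((p - 1) / p) ^ 2 = p - 2 + 1 / p := by
        field_simp
        ring
      push_cast
      rw [Real.sqrt_sq hp0.le, hsq]
      exact le_add_of_nonneg_right (by positivity)
    · rw [show 2 * (t + 2) = 2 * t + 4 by ring,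
        mul_gcdTotientSum_prime_pow_two_mul_add_four hp h0 h1 h2 h3]
      refine ⟨by positivity, le_of_eq ?_⟩
      rw [show (p : ℝ) ^ (2 * t + 4) = ((p : ℝ) ^ (t + 2)) ^ 2 by ring,
        Real.sqrt_sq (by positivity)]
      field_simp
      push_cast
      ring
  · rw [mul_gcdTotientSum_prime_pow_two_mul_add_one hp h0 h1 h2 h3]
    exact ⟨le_rfl, by push_cast; positivity⟩

end PrimePow

theorem stmt_18_general (β Sg : ArithmeticFunction ℤ)
    (hβ : β.IsMultiplicative)
    (hβ1 : ∀ p : ℕ, p.Prime → β p = -2)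
    (hβ2 : ∀ p : ℕ, p.Prime → β (p ^ 2) = 1)
    (hβ3 : ∀ p r : ℕ, p.Prime → 3 ≤ r → β (p ^ r) = 0)
    (hSg : ∀ N : ℕ, 0 < N → Sg N =
      ∑ τ ∈ N.divisors, ((Nat.gcd τ (N / τ)).totient : ℤ)) :
    ∀ N : ℕ, 1 ≤ N →
      0 ≤ (((β * Sg) N : ℤ) : ℝ) ∧
      (((β * Sg) N : ℤ) : ℝ)
        ≤ Real.sqrt N / (∏ p ∈ N.primeFactors, (1 + 1 / ((p : ℝ) - 1))) ^ 2 := by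
  obtain rfl := eq_gcdTotientSum hSg
  set F : ArithmeticFunction ℝ := ↑(β * gcdTotientSum)
  have hF : F.IsMultiplicative := (hβ.mul isMultiplicative_gcdTotientSum).intCast
  have hlocal p k (hp : p.Prime) (hk : 1 ≤ k) :
      0 ≤ F (p ^ k) ∧ F (p ^ k) ≤ √((p : ℝ) ^ k) * (((p : ℝ) - 1) / p) ^ 2 := by
    rw [intCoe_apply]
    exact_mod_cast mul_gcdTotientSum_prime_pow_bounds hp hβ.map_one (hβ1 p hp) (hβ2 p hp)
      (hβ3 p · hp) hk
  intro N _
  rw [← intCoe_apply (R := ℝ)]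
  refine ⟨hF.nonneg_of_prime_pow (fun p k hp hk => (hlocal p k hp hk).1) N, ?_⟩
  calc F N ≤ √(N : ℝ) * ∏ p ∈ N.primeFactors, (((p : ℝ) - 1) / p) ^ 2 :=
        hF.le_sqrt_mul_prod_of_prime_pow (fun p k hp hk => (hlocal p k hp hk).1)
          (fun p k hp hk => (hlocal p k hp hk).2) N
    _ = √N / (∏ p ∈ N.primeFactors, (1 + 1 / ((p : ℝ) - 1))) ^ 2 := by
      rw [div_eq_mul_inv, ← inv_pow, ← prod_inv_distrib, ← prod_pow]
      refine congrArg _ (prod_congr rfl fun p hp => ?_)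
      rw [sub_one_div_eq_inv_one_add_one_div_sub_one]
      exact_mod_cast (Nat.prime_of_mem_primeFactors hp).ne_one

theorem stmt_18 (m d : ℕ) (hm : 1 ≤ m) (hd : d * d = m)
    (β Sg : ArithmeticFunction ℤ)
    (hβ : β.IsMultiplicative)
    (hβ1 : ∀ p : ℕ, p.Prime → β p = -2)
    (hβ2 : ∀ p : ℕ, p.Prime → β (p ^ 2) = 1)
    (hβ3 : ∀ p r : ℕ, p.Prime → 3 ≤ r → β (p ^ r) = 0)
    (hSg : ∀ N : ℕ, 0 < N → Sg N =
      ∑ τ ∈ N.divisors, ((Nat.gcd τ (N / τ)).totient : ℤ)) :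
    ∀ N : ℕ, 1 ≤ N →
      0 ≤ (((β * Sg) N : ℤ) : ℝ) ∧
      (((β * Sg) N : ℤ) : ℝ)
        ≤ Real.sqrt N / (∏ p ∈ N.primeFactors, (1 + 1 / ((p : ℝ) - 1))) ^ 2 :=
  stmt_18_general β Sg hβ hβ1 hβ2 hβ3 hSg
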